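/- (Relative deviation inequality) Let κ ≥ 1 and let π satisfy MAH(κ) with constant c > 0. Let ℱ = {f₁,…,f_M} be measurable functions from 𝒳 to [−1,1] and let D_n be an i.i.d. sample of size n from π. For f ∈ ℱ and x > 0 set Z_x(f) = [A(f) − A_n(f) − (A(f*) − A_n(f*))] / (A(f) − A* + x). Then for all t, x > 0 and all n ≥ 1, P[ max_{f∈ℱ} Z_x(f) > t ] ≤ M[ (1 + 8c x^{1/κ}/(n(tx)²)) exp(−n(tx)²/(8c x^{1/κ})) + (1 + 16/(3ntx)) exp(−3ntx/16) ]. -/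

import Mathlib

/-!
Fix one rule `g = f_j` and write `δ = A(g) - A*`. The numerator of `Z_x(g)` is the mean of `n`
i.i.d. copies of the centred excess hinge loss `W = (A(g) - A(f*)) - (ℓ_g - ℓ_{f*})`. On labels
`±1` the hinge losses of `[-1, 1]`-valued rules differ by exactly `|g - f*|`, so `|W| ≤ 4` and
`E W² ≤ 2 E|g - f*| ≤ 2c δ^{1/κ}` by MAH(κ). Bernstein's inequality at level `t (δ + x)` with
variance proxy `2c max(δ, x)^{1/κ}` gives `exp(-n(tx)²/(8c x^{1/κ})) + exp(-3ntx/16)`, using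
`x² max(δ, x)^{1/κ} ≤ (δ + x)² x^{1/κ}` (as `1/κ ≤ 2`). The factors `1 + ⋯` are at least `1`, and
a union bound over the `M` rules finishes.
-/

open MeasureTheory
open scoped ENNReal NNReal

noncomputable section

namespace AggClass

variable {X : Type*} [MeasurableSpace X]

/-- The sign function, with the convention `sgn 0 = 1`. -/
def sgn (t : ℝ) : ℝ := if 0 ≤ t then 1 else -1

/-- The Bayes rule `f*(x) = sign (2 η x - 1)`. -/
def bayes (η : X → ℝ) : X → ℝ := fun x => sgn (2 * η x - 1)

/-- The hinge risk `A(f) = E[max (1 - Y f(X)) 0]`, as an extended nonnegative real. -/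
def hingeRiskE (π : Measure (X × ℝ)) (f : X → ℝ) : ℝ≥0∞ :=
  ∫⁻ p, ENNReal.ofReal (max (1 - p.2 * f p.1) 0) ∂π

/-- The optimal hinge risk `A* = inf {A(f) : f : X → ℝ measurable}`. -/
def optHingeRiskE (π : Measure (X × ℝ)) : ℝ≥0∞ :=
  ⨅ (f : X → ℝ) (_ : Measurable f), hingeRiskE π f

/-- The hinge risk, real-valued. -/
def hingeRisk (π : Measure (X × ℝ)) (f : X → ℝ) : ℝ := (hingeRiskE π f).toReal

/-- The optimal hinge risk, real-valued. -/
def optHingeRisk (π : Measure (X × ℝ)) : ℝ := (optHingeRiskE π).toReal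

/-- The misclassification risk `R(f) = π (Y ≠ sign (f X))`, ℝ≥0∞-valued. -/
def misRiskE (π : Measure (X × ℝ)) (f : X → ℝ) : ℝ≥0∞ :=
  π {p : X × ℝ | p.2 ≠ sgn (f p.1)}

/-- The misclassification risk, real-valued. -/
def misRisk (π : Measure (X × ℝ)) (f : X → ℝ) : ℝ := (misRiskE π f).toReal

/-- `π` is a joint law of a pair (X,Y) on `X × {-1,1}` with regression function
`η x = π(Y = 1 ∣ X = x)`. -/
structure IsClassif (π : Measure (X × ℝ)) (η : X → ℝ) : Prop where
  labels : π {p : X × ℝ | p.2 = 1 ∨ p.2 = -1}ᶜ = 0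
  meas : Measurable η
  mem01 : ∀ x, η x ∈ Set.Icc (0 : ℝ) 1
  cond : ∀ B : Set X, MeasurableSet B →
    π (B ×ˢ ({1} : Set ℝ)) = ∫⁻ x in B, ENNReal.ofReal (η x) ∂(π.map Prod.fst)

/-- Margin assumption MA(κ) with constant c₀ : for every measurable prediction rule
`f : X → {-1,1}`, `E[|f(X) - f*(X)|] ≤ c₀ (R(f) - R*)^(1/κ)`. -/
def MA (π : Measure (X × ℝ)) (η : X → ℝ) (κ c₀ : ℝ) : Prop :=
  ∀ f : X → ℝ, Measurable f → (∀ x, f x = 1 ∨ f x = -1) →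
    ∫ x, |f x - bayes η x| ∂(π.map Prod.fst)
      ≤ c₀ * (misRisk π f - misRisk π (bayes η)) ^ (1 / κ)

/-- Margin assumption for the hinge risk MAH(κ) with constant c : for every measurable
`f : X → [-1,1]`, `E[|f(X) - f*(X)|] ≤ c (A(f) - A*)^(1/κ)`. -/
def MAH (π : Measure (X × ℝ)) (η : X → ℝ) (κ c : ℝ) : Prop :=
  ∀ f : X → ℝ, Measurable f → (∀ x, f x ∈ Set.Icc (-1 : ℝ) 1) →
    ∫ x, |f x - bayes η x| ∂(π.map Prod.fst)
      ≤ c * (hingeRisk π f - optHingeRisk π) ^ (1 / κ)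

/-- Convex combination of f₁,…,f_M with weights w. -/
def convComb {M : ℕ} (f : Fin M → X → ℝ) (w : Fin M → ℝ) : X → ℝ :=
  fun x => ∑ j, w j * f j x

/-- The set of hinge risks of the elements of the convex hull of f₁,…,f_M. -/
def convRiskSet (π : Measure (X × ℝ)) {M : ℕ} (f : Fin M → X → ℝ) : Set ℝ :=
  {a | ∃ w : Fin M → ℝ, (∀ j, 0 ≤ w j) ∧ (∑ j, w j) = 1 ∧ a = hingeRisk π (convComb f w)}

/-- The law of an i.i.d. sample of size n from π. -/
def sample {α : Type*} [MeasurableSpace α] (π : Measure α) [SigmaFinite π] (n : ℕ) :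
    Measure (Fin n → α) :=
  Measure.pi fun _ => π

/-- The empirical hinge risk on the sample D. -/
def empHinge {n : ℕ} (D : Fin n → X × ℝ) (f : X → ℝ) : ℝ :=
  (n : ℝ)⁻¹ * ∑ i, max (1 - (D i).2 * f (D i).1) 0

/-- The empirical misclassification risk on the sample D. -/
def empMis {n : ℕ} (D : Fin n → X × ℝ) (f : X → ℝ) : ℝ :=
  (n : ℝ)⁻¹ * ∑ i, if (D i).2 ≠ f (D i).1 then (1 : ℝ) else 0

/-- The set of indices minimizing the empirical hinge risk. -/
def ermSet {n M : ℕ} (f : Fin M → X → ℝ) (D : Fin n → X × ℝ) : Finset (Fin M) :=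
  Finset.univ.filter fun j => ∀ k, empHinge D (f j) ≤ empHinge D (f k)

/-- `tf` is an empirical risk minimization (ERM) aggregate for the hinge loss. -/
def IsERM {n M : ℕ} (f : Fin M → X → ℝ) (tf : (Fin n → X × ℝ) → X → ℝ) : Prop :=
  ∀ D, ∃ j ∈ ermSet f D, tf D = f j

/-- `tf` is the averaged ERM (AERM) aggregate for the hinge loss. -/
def IsAERM {n M : ℕ} (f : Fin M → X → ℝ) (tf : (Fin n → X × ℝ) → X → ℝ) : Prop :=
  ∀ D, tf D = fun x => ((ermSet f D).card : ℝ)⁻¹ * ∑ j ∈ ermSet f D, f j x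

/-- The exponential weights for the hinge loss. -/
def aewWeight {n M : ℕ} (f : Fin M → X → ℝ) (D : Fin n → X × ℝ) (j : Fin M) : ℝ :=
  Real.exp (-(n : ℝ) * empHinge D (f j)) / ∑ k, Real.exp (-(n : ℝ) * empHinge D (f k))

/-- `tf` is the aggregation-with-exponential-weights (AEW) aggregate for the hinge loss. -/
def IsAEW {n M : ℕ} (f : Fin M → X → ℝ) (tf : (Fin n → X × ℝ) → X → ℝ) : Prop :=
  ∀ D, tf D = fun x => ∑ j, aewWeight f D j * f j x

/-- Empirical hinge risk on the first k observations of the sample D. -/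
def empHingeK {n : ℕ} (D : Fin n → X × ℝ) (k : ℕ) (f : X → ℝ) : ℝ :=
  (k : ℝ)⁻¹ * ∑ i ∈ Finset.univ.filter (fun i : Fin n => (i : ℕ) < k),
    max (1 - (D i).2 * f (D i).1) 0

/-- The cumulative exponential weights for the hinge loss. -/
def caewWeight {n M : ℕ} (f : Fin M → X → ℝ) (D : Fin n → X × ℝ) (j : Fin M) : ℝ :=
  (n : ℝ)⁻¹ * ∑ k ∈ Finset.Icc 1 n,
    Real.exp (-(k : ℝ) * empHingeK D k (f j)) /
      ∑ l, Real.exp (-(k : ℝ) * empHingeK D k (f l))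

end AggClass

theorem Real.exp_le_one_add_add_sq {y : ℝ} (hy : y ≤ 3 / 2) : exp y ≤ 1 + y + y ^ 2 := by
  rcases le_or_gt 0 y with hy0 | hy0
  · have half : exp (y / 2) ≤ 1 + y / 2 + 3 / 4 * (y / 2) ^ 2 := by
      have := exp_bound' (x := y / 2) (n := 2) (by positivity) (by linarith) (by norm_num)
      simp [Finset.sum_range_succ, Nat.factorial] at this
      linarith
    calc exp y = exp (y / 2) ^ 2 := by rw [← exp_nat_mul]; ring_nf
      _ ≤ (1 + y / 2 + 3 / 4 * (y / 2) ^ 2) ^ 2 := by gcongr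
      _ ≤ 1 + y + y ^ 2 := by
        nlinarith [mul_nonneg (sq_nonneg y) (by linarith : (0 : ℝ) ≤ 3 / 2 - y),
          mul_nonneg (mul_nonneg (sq_nonneg y) hy0) (by linarith : (0 : ℝ) ≤ 3 / 2 - y)]
  · have h : exp y * (1 - y) ≤ 1 := by
      calc exp y * (1 - y) ≤ exp y * exp (-y) := by gcongr; linarith [add_one_le_exp (-y)]
        _ = 1 := by rw [← exp_add]; simp
    nlinarith [exp_pos y]

theorem Real.sq_mul_max_rpow_le {δ x r : ℝ} (hδ : 0 ≤ δ) (hx : 0 < x) (hr : r ≤ 2) :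
    x ^ 2 * max δ x ^ r ≤ (δ + x) ^ 2 * x ^ r := by
  rcases le_total δ x with h | h
  · rw [max_eq_right h]
    gcongr
    linarith
  · rw [max_eq_left h]
    have hratio : (δ / x) ^ r ≤ (δ / x) ^ (2 : ℝ) :=
      Real.rpow_le_rpow_of_exponent_le ((one_le_div hx).2 h) hr
    rw [Real.div_rpow hδ hx.le, Real.div_rpow hδ hx.le, Real.rpow_two, Real.rpow_two,
      div_le_div_iff₀ (by positivity) (by positivity)] at hratio
    calc x ^ 2 * δ ^ r ≤ δ ^ 2 * x ^ r := by linarith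
      _ ≤ (δ + x) ^ 2 * x ^ r := by gcongr; linarith

/-- Bernstein's choice of the parameter in the Chernoff bound. -/
theorem Real.exp_mul_sq_mul_sub_mul_le_of_eq_min {n a b σ2 l : ℝ} (hn : 0 ≤ n) (hb : 0 < b)
    (hσ : 0 < σ2) (hl : l = min (a / (2 * σ2)) (3 / (2 * b))) :
    exp (n * (l ^ 2 * σ2 - l * a))
      ≤ exp (-(n * a ^ 2) / (4 * σ2)) + exp (-(3 * n * a) / (4 * b)) := by
  rcases min_cases (a / (2 * σ2)) (3 / (2 * b)) with ⟨hmin, -⟩ | ⟨hmin, hlt⟩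
  · refine le_add_of_le_of_nonneg (le_of_eq (congrArg exp ?_)) (exp_pos _).le
    rw [hl, hmin]; field_simp; ring
  · refine le_add_of_nonneg_of_le (exp_pos _).le (exp_le_exp.2 ?_)
    rw [div_lt_div_iff₀ (by positivity) (by positivity)] at hlt
    have : l ^ 2 * σ2 - l * a ≤ -(3 * a) / (4 * b) := by
      rw [hl, hmin, div_pow, le_div_iff₀ (by positivity)]
      field_simp
      nlinarith
    calc n * (l ^ 2 * σ2 - l * a) ≤ n * (-(3 * a) / (4 * b)) := by gcongr
      _ = -(3 * n * a) / (4 * b) := by ring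

theorem MeasureTheory.measureReal_lt_ciSup_le_sum {ι Ω : Type*} [Fintype ι] [Nonempty ι]
    [MeasurableSpace Ω] (μ : Measure Ω) (g : ι → Ω → ℝ) (t : ℝ) :
    μ.real {ω | t < ⨆ j, g j ω} ≤ ∑ j, μ.real {ω | t < g j ω} := by
  have hunion : {ω | t < ⨆ j, g j ω} = ⋃ j, {ω | t < g j ω} := by
    ext ω
    simp only [Set.mem_ofPred_eq, Set.mem_iUnion]
    exact lt_ciSup_iff (Set.finite_range _).bddAbove
  rw [hunion]
  exact measureReal_iUnion_fintype_le _

namespace ProbabilityTheory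

open MeasureTheory Real

variable {Ω : Type*} {mΩ : MeasurableSpace Ω} {μ : Measure Ω} {W : Ω → ℝ}

theorem mgf_le_exp_mul_sq [IsProbabilityMeasure μ] {b l σ2 : ℝ} (hW : AEStronglyMeasurable W μ)
    (hbound : ∀ᵐ ω ∂μ, |W ω| ≤ b) (hmean : ∫ ω, W ω ∂μ = 0) (hvar : ∫ ω, W ω ^ 2 ∂μ ≤ σ2)
    (hl : 0 ≤ l) (hlb : l * b ≤ 3 / 2) :
    mgf W μ l ≤ exp (l ^ 2 * σ2) := by
  have hWint : Integrable W μ := .of_bound hW b (by simpa using hbound)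
  have hW2int : Integrable (fun ω => W ω ^ 2) μ :=
    .of_bound (hW.pow 2) (b ^ 2) (by
      filter_upwards [hbound] with ω hω
      simpa using pow_le_pow_left₀ (abs_nonneg _) hω 2)
  have hpoint : ∀ᵐ ω ∂μ, exp (l * W ω) ≤ 1 + l * W ω + l ^ 2 * W ω ^ 2 := by
    filter_upwards [hbound] with ω hω
    have : l * W ω ≤ 3 / 2 :=
      (mul_le_mul_of_nonneg_left ((le_abs_self _).trans hω) hl).trans hlb
    linarith [exp_le_one_add_add_sq this, mul_pow l (W ω) 2]
  calc mgf W μ l ≤ ∫ ω, (1 + l * W ω + l ^ 2 * W ω ^ 2) ∂μ :=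
        integral_mono_of_nonneg (.of_forall fun ω => (exp_pos _).le)
          (((integrable_const 1).add (hWint.const_mul l)).add (hW2int.const_mul _)) hpoint
    _ = 1 + l ^ 2 * ∫ ω, W ω ^ 2 ∂μ := by
        rw [integral_add (f := fun ω => 1 + l * W ω)
            ((integrable_const 1).add (hWint.const_mul l)) (hW2int.const_mul _),
          integral_add (integrable_const 1) (hWint.const_mul l), integral_const_mul,
          integral_const_mul, hmean]
        simp
    _ ≤ 1 + l ^ 2 * σ2 := by gcongr
    _ ≤ exp (l ^ 2 * σ2) := by linarith [add_one_le_exp (l ^ 2 * σ2)]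

theorem measureReal_le_sum_le_exp_mul_mgf_pow {ι : Type*} [Fintype ι] [IsProbabilityMeasure μ]
    {l : ℝ} (hl : 0 ≤ l) (hint : Integrable (fun ω => exp (l * W ω)) μ) (s : ℝ) :
    (Measure.pi fun _ : ι => μ).real {D | s ≤ ∑ i, W (D i)}
      ≤ exp (-l * s) * mgf W μ l ^ Fintype.card ι := by
  have hprod : ∀ D : ι → Ω, exp (l * ∑ i, W (D i)) = ∏ i, exp (l * W (D i)) := fun D => by
    rw [Finset.mul_sum, exp_sum]
  have hmgf : mgf (fun D : ι → Ω => ∑ i, W (D i)) (Measure.pi fun _ => μ) l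
      = mgf W μ l ^ Fintype.card ι := by
    simp only [mgf, hprod]
    exact integral_fintype_prod_eq_pow (μ := μ) fun ω => exp (l * W ω)
  rw [← hmgf]
  refine measure_ge_le_exp_mul_mgf s hl ?_
  simp only [hprod]
  exact Integrable.fintype_prod fun _ => hint

/-- **Bernstein's inequality**. -/
theorem measureReal_lt_sampleMean_le [IsProbabilityMeasure μ] {b σ2 a : ℝ}
    (hW : AEStronglyMeasurable W μ) (hbound : ∀ᵐ ω ∂μ, |W ω| ≤ b) (hmean : ∫ ω, W ω ∂μ = 0)
    (hvar : ∫ ω, W ω ^ 2 ∂μ ≤ σ2) (hb : 0 < b) (hσ : 0 < σ2) (ha : 0 < a) (n : ℕ) :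
    (Measure.pi fun _ : Fin n => μ).real {D | a < (n : ℝ)⁻¹ * ∑ i, W (D i)}
      ≤ exp (-(n * a ^ 2) / (4 * σ2)) + exp (-(3 * n * a) / (4 * b)) := by
  set l := min (a / (2 * σ2)) (3 / (2 * b))
  have hl : 0 < l := lt_min (by positivity) (by positivity)
  have hlb : l * b ≤ 3 / 2 := by
    calc l * b ≤ 3 / (2 * b) * b := by gcongr; exact min_le_right _ _
      _ = 3 / 2 := by field_simp
  have hint : Integrable (fun ω => exp (l * W ω)) μ := by
    refine .of_bound (continuous_exp.comp_aestronglyMeasurable (hW.const_mul l)) (exp (3 / 2)) ?_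
    filter_upwards [hbound] with ω hω
    rw [norm_of_nonneg (exp_pos _).le, exp_le_exp]
    exact (mul_le_mul_of_nonneg_left ((le_abs_self _).trans hω) hl.le).trans hlb
  have hsub : {D : Fin n → Ω | a < (n : ℝ)⁻¹ * ∑ i, W (D i)} ⊆ {D | n * a ≤ ∑ i, W (D i)} := by
    intro D hD
    rcases n.eq_zero_or_pos with rfl | hn
    · simp at hD; linarith
    · rw [Set.mem_ofPred_eq, inv_mul_eq_div, lt_div_iff₀ (by exact_mod_cast hn)] at hD
      exact (by linarith : (n : ℝ) * a ≤ ∑ i, W (D i))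
  have htail : (Measure.pi fun _ : Fin n => μ).real {D | n * a ≤ ∑ i, W (D i)}
      ≤ exp (n * (l ^ 2 * σ2 - l * a)) := by
    calc _ ≤ exp (-l * (n * a)) * mgf W μ l ^ n := by
          simpa using measureReal_le_sum_le_exp_mul_mgf_pow (ι := Fin n) hl.le hint (n * a)
      _ ≤ exp (-l * (n * a)) * exp (l ^ 2 * σ2) ^ n := by
          gcongr
          exacts [mgf_nonneg, mgf_le_exp_mul_sq hW hbound hmean hvar hl.le hlb]
      _ = exp (n * (l ^ 2 * σ2 - l * a)) := by rw [← exp_nat_mul, ← exp_add]; ring_nf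
  exact (measureReal_mono hsub).trans
    (htail.trans (exp_mul_sq_mul_sub_mul_le_of_eq_min n.cast_nonneg hb hσ rfl))

end ProbabilityTheory

namespace AggClass

open Set ProbabilityTheory

variable {X : Type*}

theorem bayes_mem_Icc (η : X → ℝ) (x : X) : bayes η x ∈ Icc (-1 : ℝ) 1 := by
  unfold bayes sgn; split_ifs <;> norm_num

def hingeLoss (g : X → ℝ) (p : X × ℝ) : ℝ := max (1 - p.2 * g p.1) 0

theorem hingeLoss_nonneg (g : X → ℝ) (p : X × ℝ) : 0 ≤ hingeLoss g p :=
  le_max_right _ _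

theorem hingeLoss_eq {g : X → ℝ} {p : X × ℝ} (hg : g p.1 ∈ Icc (-1 : ℝ) 1)
    (hp : p.2 = 1 ∨ p.2 = -1) : hingeLoss g p = 1 - p.2 * g p.1 := by
  obtain ⟨h₁, h₂⟩ := hg
  rcases hp with h | h <;> rw [hingeLoss, h, max_eq_left (by linarith)]

theorem hingeLoss_le_two {g : X → ℝ} {p : X × ℝ} (hg : g p.1 ∈ Icc (-1 : ℝ) 1)
    (hp : p.2 = 1 ∨ p.2 = -1) : hingeLoss g p ≤ 2 := by
  rw [hingeLoss_eq hg hp]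
  obtain ⟨h₁, h₂⟩ := hg
  rcases hp with h | h <;> rw [h] <;> linarith

theorem abs_hingeLoss_sub_hingeLoss {g h : X → ℝ} {p : X × ℝ} (hg : g p.1 ∈ Icc (-1 : ℝ) 1)
    (hh : h p.1 ∈ Icc (-1 : ℝ) 1) (hp : p.2 = 1 ∨ p.2 = -1) :
    |hingeLoss g p - hingeLoss h p| = |g p.1 - h p.1| := by
  rw [hingeLoss_eq hg hp, hingeLoss_eq hh hp]
  rcases hp with h | h <;> rw [h]
  · rw [abs_sub_comm]; congr 1; ring
  · congr 1; ring

variable [MeasurableSpace X]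

theorem measurable_bayes {η : X → ℝ} (hη : Measurable η) : Measurable (bayes η) :=
  Measurable.ite (measurableSet_le measurable_const (by fun_prop)) measurable_const
    measurable_const

theorem IsClassif.ae_label {π : Measure (X × ℝ)} {η : X → ℝ} (hπ : IsClassif π η) :
    ∀ᵐ p ∂π, p.2 = 1 ∨ p.2 = -1 :=
  mem_ae_iff.2 hπ.labels

theorem measurable_hingeLoss {g : X → ℝ} (hg : Measurable g) : Measurable (hingeLoss g) := by
  unfold hingeLoss; fun_prop

theorem hingeRisk_eq_integral (π : Measure (X × ℝ)) {g : X → ℝ} (hg : Measurable g) :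
    hingeRisk π g = ∫ p, hingeLoss g p ∂π :=
  (integral_eq_lintegral_of_nonneg_ae (.of_forall (hingeLoss_nonneg g))
    (measurable_hingeLoss hg).aestronglyMeasurable).symm

/-- The sample mean of `centeredExcessLoss π g (bayes η)` is the numerator of `Z_x(g)`. -/
def centeredExcessLoss (π : Measure (X × ℝ)) (g h : X → ℝ) (p : X × ℝ) : ℝ :=
  hingeRisk π g - hingeRisk π h - (hingeLoss g p - hingeLoss h p)

theorem measurable_centeredExcessLoss (π : Measure (X × ℝ)) {g h : X → ℝ} (hg : Measurable g)
    (hh : Measurable h) : Measurable (centeredExcessLoss π g h) :=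
  measurable_const.sub ((measurable_hingeLoss hg).sub (measurable_hingeLoss hh))

theorem sampleMean_centeredExcessLoss (π : Measure (X × ℝ)) (g h : X → ℝ) {n : ℕ} (hn : n ≠ 0)
    (D : Fin n → X × ℝ) :
    (n : ℝ)⁻¹ * ∑ i, centeredExcessLoss π g h (D i)
      = hingeRisk π g - empHinge D g - (hingeRisk π h - empHinge D h) := by
  simp only [centeredExcessLoss, empHinge, hingeLoss, Finset.sum_sub_distrib, Finset.sum_const,
    Finset.card_univ, Fintype.card_fin, nsmul_eq_mul]
  field_simp
  ring

section ProbabilityMeasure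

variable {π : Measure (X × ℝ)} [IsProbabilityMeasure π] {g h : X → ℝ}

theorem integrable_hingeLoss (hlab : ∀ᵐ p ∂π, p.2 = 1 ∨ p.2 = -1) (hg : Measurable g)
    (hgv : ∀ x, g x ∈ Icc (-1 : ℝ) 1) : Integrable (hingeLoss g) π := by
  refine .of_bound (measurable_hingeLoss hg).aestronglyMeasurable 2 ?_
  filter_upwards [hlab] with p hp
  rw [Real.norm_of_nonneg (hingeLoss_nonneg g p)]
  exact hingeLoss_le_two (hgv _) hp

theorem hingeRisk_le_two (hlab : ∀ᵐ p ∂π, p.2 = 1 ∨ p.2 = -1) (hg : Measurable g)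
    (hgv : ∀ x, g x ∈ Icc (-1 : ℝ) 1) : hingeRisk π g ≤ 2 := by
  rw [hingeRisk_eq_integral π hg]
  refine (integral_mono_ae (integrable_hingeLoss hlab hg hgv) (integrable_const 2) ?_).trans_eq
    (by simp)
  filter_upwards [hlab] with p hp
  exact hingeLoss_le_two (hgv _) hp

theorem optHingeRisk_le_hingeRisk (hlab : ∀ᵐ p ∂π, p.2 = 1 ∨ p.2 = -1) (hg : Measurable g)
    (hgv : ∀ x, g x ∈ Icc (-1 : ℝ) 1) : optHingeRisk π ≤ hingeRisk π g := by
  have hfin : hingeRiskE π g ≠ ⊤ := by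
    rw [hingeRiskE, ← lt_top_iff_ne_top]
    exact (integrable_hingeLoss hlab hg hgv).lintegral_lt_top
  exact ENNReal.toReal_mono hfin (iInf₂_le g hg)

theorem hingeRisk_sub_hingeRisk_eq_integral (hlab : ∀ᵐ p ∂π, p.2 = 1 ∨ p.2 = -1)
    (hg : Measurable g) (hh : Measurable h) (hgv : ∀ x, g x ∈ Icc (-1 : ℝ) 1)
    (hhv : ∀ x, h x ∈ Icc (-1 : ℝ) 1) :
    hingeRisk π g - hingeRisk π h = ∫ p, (hingeLoss g p - hingeLoss h p) ∂π := by
  rw [hingeRisk_eq_integral π hg, hingeRisk_eq_integral π hh,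
    integral_sub (integrable_hingeLoss hlab hg hgv) (integrable_hingeLoss hlab hh hhv)]

theorem abs_centeredExcessLoss_le (hlab : ∀ᵐ p ∂π, p.2 = 1 ∨ p.2 = -1)
    (hg : Measurable g) (hh : Measurable h) (hgv : ∀ x, g x ∈ Icc (-1 : ℝ) 1)
    (hhv : ∀ x, h x ∈ Icc (-1 : ℝ) 1) : ∀ᵐ p ∂π, |centeredExcessLoss π g h p| ≤ 4 := by
  filter_upwards [hlab] with p hp
  have := hingeLoss_le_two (hgv p.1) hp
  have := hingeLoss_le_two (hhv p.1) hp
  have := hingeLoss_nonneg g p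
  have := hingeLoss_nonneg h p
  have := hingeRisk_le_two hlab hg hgv
  have := hingeRisk_le_two hlab hh hhv
  have : 0 ≤ hingeRisk π g := ENNReal.toReal_nonneg
  have : 0 ≤ hingeRisk π h := ENNReal.toReal_nonneg
  rw [centeredExcessLoss, abs_le]
  constructor <;> linarith

theorem integral_centeredExcessLoss (hlab : ∀ᵐ p ∂π, p.2 = 1 ∨ p.2 = -1)
    (hg : Measurable g) (hh : Measurable h) (hgv : ∀ x, g x ∈ Icc (-1 : ℝ) 1)
    (hhv : ∀ x, h x ∈ Icc (-1 : ℝ) 1) : ∫ p, centeredExcessLoss π g h p ∂π = 0 := by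
  have hint : Integrable (fun p => hingeLoss g p - hingeLoss h p) π :=
    (integrable_hingeLoss hlab hg hgv).sub (integrable_hingeLoss hlab hh hhv)
  simp only [centeredExcessLoss]
  rw [integral_sub (integrable_const _) hint,
    ← hingeRisk_sub_hingeRisk_eq_integral hlab hg hh hgv hhv]
  simp

theorem integral_centeredExcessLoss_sq_le (hlab : ∀ᵐ p ∂π, p.2 = 1 ∨ p.2 = -1)
    (hg : Measurable g) (hh : Measurable h) (hgv : ∀ x, g x ∈ Icc (-1 : ℝ) 1)
    (hhv : ∀ x, h x ∈ Icc (-1 : ℝ) 1) :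
    ∫ p, centeredExcessLoss π g h p ^ 2 ∂π ≤ 2 * ∫ y, |g y - h y| ∂(π.map Prod.fst) := by
  set Z : X × ℝ → ℝ := fun p => hingeLoss g p - hingeLoss h p
  have hZ : Measurable Z := (measurable_hingeLoss hg).sub (measurable_hingeLoss hh)
  have habs : ∀ᵐ p ∂π, |Z p| = |g p.1 - h p.1| := by
    filter_upwards [hlab] with p hp
    exact abs_hingeLoss_sub_hingeLoss (hgv _) (hhv _) hp
  have hdiff : ∀ y, |g y - h y| ≤ 2 := fun y => by
    obtain ⟨_, _⟩ := hgv y; obtain ⟨_, _⟩ := hhv y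
    rw [abs_le]; constructor <;> linarith
  calc ∫ p, centeredExcessLoss π g h p ^ 2 ∂π = Var[Z; π] := by
        rw [variance_eq_integral hZ.aemeasurable]
        congr 1 with p
        rw [centeredExcessLoss, hingeRisk_sub_hingeRisk_eq_integral hlab hg hh hgv hhv]
        ring
    _ ≤ ∫ p, Z p ^ 2 ∂π := variance_le_expectation_sq hZ.aestronglyMeasurable
    _ ≤ ∫ p, 2 * |g p.1 - h p.1| ∂π := by
        refine integral_mono_of_nonneg (.of_forall fun p => sq_nonneg _)
          (.of_bound (by fun_prop) 4 (.of_forall fun p => ?_)) ?_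
        · rw [Real.norm_of_nonneg (by positivity)]
          linarith [hdiff p.1]
        · filter_upwards [habs] with p hp
          rw [← sq_abs, hp, sq]
          gcongr
          exact hdiff _
    _ = 2 * ∫ y, |g y - h y| ∂(π.map Prod.fst) := by
        rw [integral_const_mul, integral_map measurable_fst.aemeasurable (by fun_prop)]

theorem integral_centeredExcessLoss_bayes_sq_le {η : X → ℝ} (hπ : IsClassif π η) {κ c : ℝ}
    (hMAH : MAH π η κ c) (hg : Measurable g) (hgv : ∀ x, g x ∈ Icc (-1 : ℝ) 1) :
    ∫ p, centeredExcessLoss π g (bayes η) p ^ 2 ∂π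
      ≤ 2 * c * (hingeRisk π g - optHingeRisk π) ^ (1 / κ) := by
  rw [mul_assoc]
  exact (integral_centeredExcessLoss_sq_le hπ.ae_label hg (measurable_bayes hπ.meas) hgv
    (bayes_mem_Icc η)).trans (by gcongr; exact hMAH g hg hgv)

theorem measureReal_lt_relativeDeviation_le {η : X → ℝ} (hπ : IsClassif π η) {κ c : ℝ}
    (hκ : 1 ≤ κ) (hc : 0 < c) (hMAH : MAH π η κ c) {n : ℕ} (hn : n ≠ 0) (hg : Measurable g)
    (hgv : ∀ x, g x ∈ Icc (-1 : ℝ) 1) {t x : ℝ} (ht : 0 < t) (hx : 0 < x) :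
    (sample π n).real {D | t < (hingeRisk π g - empHinge D g
        - (hingeRisk π (bayes η) - empHinge D (bayes η))) / (hingeRisk π g - optHingeRisk π + x)}
      ≤ Real.exp (-(n * (t * x) ^ 2) / (8 * c * x ^ (1 / κ)))
        + Real.exp (-(3 * n * t * x) / 16) := by
  have hf := measurable_bayes hπ.meas
  have hfv := bayes_mem_Icc η
  set W := centeredExcessLoss π g (bayes η)
  set δ := hingeRisk π g - optHingeRisk π
  have hδ : 0 ≤ δ := sub_nonneg.2 (optHingeRisk_le_hingeRisk hπ.ae_label hg hgv)
  have hvar : ∫ p, W p ^ 2 ∂π ≤ 2 * c * max δ x ^ (1 / κ) :=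
    (integral_centeredExcessLoss_bayes_sq_le hπ hMAH hg hgv).trans
      (by gcongr; exact le_max_left _ _)
  have hevent : {D : Fin n → X × ℝ | t < (hingeRisk π g - empHinge D g
        - (hingeRisk π (bayes η) - empHinge D (bayes η))) / (δ + x)}
      = {D | t * (δ + x) < (n : ℝ)⁻¹ * ∑ i, W (D i)} := by
    ext D
    rw [mem_ofPred_eq, mem_ofPred_eq, sampleMean_centeredExcessLoss π g _ hn,
      lt_div_iff₀ (by positivity)]
  rw [hevent]
  refine (measureReal_lt_sampleMean_le (measurable_centeredExcessLoss π hg hf).aestronglyMeasurable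
    (abs_centeredExcessLoss_le hπ.ae_label hg hf hgv hfv)
    (integral_centeredExcessLoss hπ.ae_label hg hf hgv hfv) hvar (by norm_num) (by positivity)
    (by positivity) n).trans (add_le_add ?_ ?_)
  · have hmax := Real.sq_mul_max_rpow_le hδ hx (r := 1 / κ)
      (by linarith [div_le_one_of_le₀ hκ (by linarith)])
    rw [Real.exp_le_exp, neg_div, neg_div, neg_le_neg_iff,
      div_le_div_iff₀ (by positivity) (by positivity)]
    calc (n : ℝ) * (t * x) ^ 2 * (4 * (2 * c * max δ x ^ (1 / κ)))
        = 8 * c * n * t ^ 2 * (x ^ 2 * max δ x ^ (1 / κ)) := by ring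
      _ ≤ 8 * c * n * t ^ 2 * ((δ + x) ^ 2 * x ^ (1 / κ)) := by gcongr
      _ = n * (t * (δ + x)) ^ 2 * (8 * c * x ^ (1 / κ)) := by ring
  · rw [Real.exp_le_exp]
    have : t * x ≤ t * (δ + x) := by nlinarith
    have : (0 : ℝ) ≤ n := n.cast_nonneg
    nlinarith

end ProbabilityMeasure

/-- relative deviation inequality for the empirical hinge risk under
MAH(κ). -/
theorem relative_deviation_inequality
    (π : Measure (X × ℝ)) [IsProbabilityMeasure π] (η : X → ℝ) (hπ : IsClassif π η)
    (κ c : ℝ) (hκ : 1 ≤ κ) (hc : 0 < c) (hMAH : MAH π η κ c)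
    (M n : ℕ) (hM : 1 ≤ M) (hn : 1 ≤ n)
    (f : Fin M → X → ℝ) (hmeas : ∀ j, Measurable (f j))
    (hval : ∀ j x, f j x ∈ Set.Icc (-1 : ℝ) 1)
    (t x : ℝ) (ht : 0 < t) (hx : 0 < x) :
    ((sample π n) {D : Fin n → X × ℝ | t <
        ⨆ j, (hingeRisk π (f j) - empHinge D (f j)
            - (hingeRisk π (bayes η) - empHinge D (bayes η)))
          / (hingeRisk π (f j) - optHingeRisk π + x)}).toReal
      ≤ M * ((1 + 8 * c * x ^ (1 / κ) / (n * (t * x) ^ 2))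
              * Real.exp (-(n * (t * x) ^ 2) / (8 * c * x ^ (1 / κ)))
          + (1 + 16 / (3 * n * t * x)) * Real.exp (-(3 * n * t * x) / 16)) := by
  have : Nonempty (Fin M) := ⟨⟨0, hM⟩⟩
  have hn0 : n ≠ 0 := by omega
  conv_rhs => rw [← Finset.card_fin M, ← nsmul_eq_mul, ← Finset.sum_const]
  refine (measureReal_lt_ciSup_le_sum _ _ t).trans (Finset.sum_le_sum fun j _ =>
    (measureReal_lt_relativeDeviation_le hπ hκ hc hMAH hn0 (hmeas j) (hval j) ht hx).trans ?_)
  refine add_le_add ?_ ?_ <;>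
    exact le_mul_of_one_le_left (Real.exp_pos _).le (le_add_of_nonneg_right (by positivity))

end AggClass
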